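/- arXiv:2004.09197 — 2 statements merged into one kernel-verified Lean document; each statement's English description precedes it below -/
import Mathlib

section
/- Let D be an N×N real matrix, d ∈ ℝᴺ, x ∈ ℝᴺ, V an N×K matrix with VᵀV invertible, P = V(VᵀV)⁻¹Vᵀ, R = D(P − I), and r = (P − I)x. If Δx ∈ ℝᴺ satisfies (D + R)Δx = −(d + Rx), then c = (VᵀV)⁻¹Vᵀ Δx satisfies (VᵀDV)c = −Vᵀ(d + Dr). -/
open Matrix

theorem Matrix.mulVec_mul_mulVec_eq_mulVec_projection {m n R : Type*} [Fintype m] [Fintype n]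
    [CommRing R] (W : Matrix m n R) (D : Matrix n n R) (V : Matrix n m R) (M : Matrix m m R)
    (y : n → R) : (W * D * V) *ᵥ ((M * W) *ᵥ y) = W *ᵥ ((D * (V * M * W)) *ᵥ y) := by
  simp only [mulVec_mulVec, Matrix.mul_assoc]

theorem stmt4_general (N K : ℕ) (D : Matrix (Fin N) (Fin N) ℝ) (d x : Fin N → ℝ)
    (V : Matrix (Fin N) (Fin K) ℝ)
    (P : Matrix (Fin N) (Fin N) ℝ) (hP : P = V * (Vᵀ * V)⁻¹ * Vᵀ)
    (R : Matrix (Fin N) (Fin N) ℝ) (hR : R = D * (P - 1))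
    (r : Fin N → ℝ) (hr : r = (P - 1) *ᵥ x)
    (Δx : Fin N → ℝ) (hΔx : (D + R) *ᵥ Δx = -(d + R *ᵥ x))
    (c : Fin K → ℝ) (hc : c = ((Vᵀ * V)⁻¹ * Vᵀ) *ᵥ Δx) :
    (Vᵀ * D * V) *ᵥ c = -(Vᵀ *ᵥ (d + D *ᵥ r)) := by
  have hDR : D + R = D * P := by rw [hR, mul_sub_one, add_sub_cancel]
  have hRx : R *ᵥ x = D *ᵥ r := by rw [hR, hr, mulVec_mulVec]
  calc (Vᵀ * D * V) *ᵥ c = Vᵀ *ᵥ ((D * P) *ᵥ Δx) := by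
        rw [hc, hP, mulVec_mul_mulVec_eq_mulVec_projection]
    _ = -(Vᵀ *ᵥ (d + D *ᵥ r)) := by rw [← hDR, hΔx, hRx, mulVec_neg]

theorem stmt4 (N K : ℕ) (D : Matrix (Fin N) (Fin N) ℝ) (d x : Fin N → ℝ)
    (V : Matrix (Fin N) (Fin K) ℝ) [Invertible (Vᵀ * V)]
    (P : Matrix (Fin N) (Fin N) ℝ) (hP : P = V * (Vᵀ * V)⁻¹ * Vᵀ)
    (R : Matrix (Fin N) (Fin N) ℝ) (hR : R = D * (P - 1))
    (r : Fin N → ℝ) (hr : r = (P - 1) *ᵥ x)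
    (Δx : Fin N → ℝ) (hΔx : (D + R) *ᵥ Δx = -(d + R *ᵥ x))
    (c : Fin K → ℝ) (hc : c = ((Vᵀ * V)⁻¹ * Vᵀ) *ᵥ Δx) :
    (Vᵀ * D * V) *ᵥ c = -(Vᵀ *ᵥ (d + D *ᵥ r)) :=
  stmt4_general N K D d x V P hP R hR r hr Δx hΔx c hc
end

section
/- Under the hypotheses of the previous statement, if additionally VᵀDV is invertible, then c = (VᵀV)⁻¹Vᵀ Δx equals −(VᵀDV)⁻¹ Vᵀ(d + Dr). -/
/-! Since `D + D (P - 1) = D P` and `P = V W Vᵀ` with `W = (VᵀV)⁻¹`, multiplying the system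
`(D + R) Δx = -(d + R x)` on the left by `Vᵀ` factors it through `VᵀDV`:
`Vᵀ (D + R) = (VᵀDV) (W Vᵀ)`. Hence `VᵀDV c = -Vᵀ (d + R x)`, and `R x = D r`. -/

open Matrix

section

variable {m n α : Type*} [Fintype m] [Fintype n] [DecidableEq m] [CommRing α]

theorem Matrix.add_mul_sub_one (D P : Matrix m m α) : D + D * (P - 1) = D * P := by
  rw [mul_sub, mul_one, add_sub_cancel]

theorem Matrix.transpose_mul_add_mul_sub_one (D : Matrix m m α) (V : Matrix m n α)
    (W : Matrix n n α) :
    Vᵀ * (D + D * (V * W * Vᵀ - 1)) = Vᵀ * D * V * (W * Vᵀ) := by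
  rw [add_mul_sub_one]
  simp only [Matrix.mul_assoc]

theorem Matrix.mulVec_transpose_mul_mulVec_of_mulVec_eq (D : Matrix m m α) (V : Matrix m n α)
    (W : Matrix n n α) {d x Δx : m → α}
    (hΔx : (D + D * (V * W * Vᵀ - 1)) *ᵥ Δx = -(d + (D * (V * W * Vᵀ - 1)) *ᵥ x)) :
    (Vᵀ * D * V) *ᵥ ((W * Vᵀ) *ᵥ Δx) = -(Vᵀ *ᵥ (d + D *ᵥ ((V * W * Vᵀ - 1) *ᵥ x))) := by
  rw [mulVec_mulVec, ← transpose_mul_add_mul_sub_one, ← mulVec_mulVec, hΔx, mulVec_neg,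
    mulVec_mulVec]

end

theorem stmt5_general (N K : ℕ) (D : Matrix (Fin N) (Fin N) ℝ) (d x : Fin N → ℝ)
    (V : Matrix (Fin N) (Fin K) ℝ)
    (P : Matrix (Fin N) (Fin N) ℝ) (hP : P = V * (Vᵀ * V)⁻¹ * Vᵀ)
    (R : Matrix (Fin N) (Fin N) ℝ) (hR : R = D * (P - 1))
    (r : Fin N → ℝ) (hr : r = (P - 1) *ᵥ x)
    (Δx : Fin N → ℝ) (hΔx : (D + R) *ᵥ Δx = -(d + R *ᵥ x))
    [Invertible (Vᵀ * D * V)] :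
    ((Vᵀ * V)⁻¹ * Vᵀ) *ᵥ Δx = -((Vᵀ * D * V)⁻¹ *ᵥ (Vᵀ *ᵥ (d + D *ᵥ r))) := by
  subst hP hR hr
  rw [← mulVec_neg]
  exact (inv_mulVec_eq_vec (mulVec_transpose_mul_mulVec_of_mulVec_eq D V _ hΔx).symm).symm

theorem stmt5 (N K : ℕ) (D : Matrix (Fin N) (Fin N) ℝ) (d x : Fin N → ℝ)
    (V : Matrix (Fin N) (Fin K) ℝ) [Invertible (Vᵀ * V)]
    (P : Matrix (Fin N) (Fin N) ℝ) (hP : P = V * (Vᵀ * V)⁻¹ * Vᵀ)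
    (R : Matrix (Fin N) (Fin N) ℝ) (hR : R = D * (P - 1))
    (r : Fin N → ℝ) (hr : r = (P - 1) *ᵥ x)
    (Δx : Fin N → ℝ) (hΔx : (D + R) *ᵥ Δx = -(d + R *ᵥ x))
    [Invertible (Vᵀ * D * V)] :
    ((Vᵀ * V)⁻¹ * Vᵀ) *ᵥ Δx = -((Vᵀ * D * V)⁻¹ *ᵥ (Vᵀ *ᵥ (d + D *ᵥ r))) :=
  stmt5_general N K D d x V P hP R hR r hr Δx hΔx
end
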